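/- arXiv:1905.02037 — 3 statements merged into one kernel-verified Lean document; each statement's English description precedes it below -/
import Mathlib

section
/- Let n ≥ 2, 0 < λ ≤ Λ < ∞, and α ∈ (0,1). Then for every A₁, A₂ ∈ 𝒜(λ,Λ): min_{Q ∈ O(n)} trace{ J_α (A₁ + A₂ − 2A₂^{1/2} Q A₁^{1/2}) } ≤ 4[ √(nΛ)·‖A₁^{1/2} − A₂^{1/2}‖ − (1−α)λ ], where ‖·‖ is the Frobenius norm. In particular, if ‖A₁^{1/2} − A₂^{1/2}‖ ≤ (1−α)λ / (2√(nΛ)), then min_{Q ∈ O(n)} trace{ J_α (A₁ + A₂ − 2A₂^{1/2} Q A₁^{1/2}) } ≤ −2(1−α)λ. -/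
open MeasureTheory Matrix

noncomputable section

abbrev EucSp (n : ℕ) := EuclideanSpace ℝ (Fin n)

/-- Principal square root of a positive semidefinite matrix (zero otherwise). -/
noncomputable def msqrt {n : ℕ} (A : Matrix (Fin n) (Fin n) ℝ) : Matrix (Fin n) (Fin n) ℝ :=
  open scoped Classical in
  if h : A.PosSemidef then
    h.1.eigenvectorUnitary.1 * diagonal ((↑) ∘ (√·) ∘ h.1.eigenvalues) *
      (star h.1.eigenvectorUnitary : Matrix (Fin n) (Fin n) ℝ) else 0

/-- `A ∈ 𝒜(λ,Λ)`: symmetric and uniformly elliptic. -/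
def UnifElliptic {n : ℕ} (lam Lam : ℝ) (A : Matrix (Fin n) (Fin n) ℝ) : Prop :=
  A.IsSymm ∧ ∀ ξ : Fin n → ℝ,
    lam * (ξ ⬝ᵥ ξ) ≤ ξ ⬝ᵥ A.mulVec ξ ∧ ξ ⬝ᵥ A.mulVec ξ ≤ Lam * (ξ ⬝ᵥ ξ)

/-- Membership in the orthogonal group `O(n)`. -/
def IsOrthMat {n : ℕ} (Q : Matrix (Fin n) (Fin n) ℝ) : Prop :=
  Q * Qᵀ = 1 ∧ Qᵀ * Q = 1

/-- Matrix acting on Euclidean space. -/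
noncomputable def mvE {n : ℕ} (M : Matrix (Fin n) (Fin n) ℝ) (y : EucSp n) : EucSp n :=
  (EuclideanSpace.equiv (Fin n) ℝ).symm (M.mulVec ((EuclideanSpace.equiv (Fin n) ℝ) y))

/-- The ellipsoid `x + ε A^{1/2} 𝔹`. -/
noncomputable def ellipsoid {n : ℕ} (ε : ℝ) (M : Matrix (Fin n) (Fin n) ℝ) (x : EucSp n) :
    Set (EucSp n) :=
  (fun y => x + ε • mvE (msqrt M) y) '' Metric.ball (0 : EucSp n) 1

/-- The matrix `J_α = diag(α-1, 1, …, 1)`. -/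
noncomputable def Jmat (n : ℕ) (α : ℝ) : Matrix (Fin n) (Fin n) ℝ :=
  Matrix.diagonal (fun i => if (i : ℕ) = 0 then α - 1 else 1)

/-- Reflection in the first coordinate axis. -/
noncomputable def J0 (n : ℕ) : Matrix (Fin n) (Fin n) ℝ :=
  Matrix.diagonal (fun i => if (i : ℕ) = 0 then -1 else 1)

/-- The first standard basis vector `e₁`. -/
noncomputable def e1 (n : ℕ) : EucSp n :=
  (EuclideanSpace.equiv (Fin n) ℝ).symm (fun i => if (i : ℕ) = 0 then 1 else 0)

/-- `f₁(x,z) = C|x-z|^α + C̃|x+z|²`. -/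
noncomputable def f1 {n : ℕ} (α C Ct : ℝ) (x z : EucSp n) : ℝ :=
  C * ‖x - z‖ ^ α + Ct * ‖x + z‖ ^ 2

/-- The annular step function `f₂`. -/
noncomputable def f2 {n : ℕ} (α C lam ε : ℝ) (N : ℕ) (x z : EucSp n) : ℝ :=
  if ‖x - z‖ / (Real.sqrt lam * ε) > (N : ℝ) then 0
  else C ^ (2 * (2 * N - ⌈2 * ‖x - z‖ / (Real.sqrt lam * ε)⌉₊)) * ε ^ α

/-!
Write `Bᵢ = Aᵢ^{1/2}` and `D = B₁ - B₂`. For every orthogonal `Q`,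
`A₁ + A₂ - 2 B₂ Q B₁ = 2 (A₁ - B₁ Q B₁) - B₂ D - D B₁ + 2 D Q B₁`,
and each of the last three terms has Frobenius norm at most `√Λ ‖D‖`; since `‖J_α‖ ≤ √n`,
Cauchy–Schwarz bounds their contribution to the trace by `4 √(nΛ) ‖D‖`.
Taking for `Q` the Householder reflection in `u = B₁⁻¹ e₁` gives
`A₁ - B₁ Q B₁ = (2 / |u|²) e₁ e₁ᵀ`, whose `J_α`-trace is `2 (α - 1) / |u|²`,
and `λ |u|² ≤ uᵀ A₁ u = |e₁|² = 1`.
-/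

namespace Matrix

variable {m n : Type*} [Fintype m] [Fintype n]

lemma trace_transpose_mul_self_nonneg (M : Matrix m n ℝ) : 0 ≤ trace (Mᵀ * M) :=
  Finset.sum_nonneg fun _ _ => Finset.sum_nonneg fun _ _ => mul_self_nonneg _

lemma trace_transpose_mul_eq_sum (J M : Matrix m n ℝ) :
    trace (Jᵀ * M) = ∑ p : m × n, J p.1 p.2 * M p.1 p.2 := by
  rw [Fintype.sum_prod_type, Finset.sum_comm]
  rfl

lemma abs_trace_transpose_mul_le (J M : Matrix m n ℝ) :
    |trace (Jᵀ * M)| ≤ √(trace (Jᵀ * J)) * √(trace (Mᵀ * M)) := by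
  rw [trace_transpose_mul_eq_sum, trace_transpose_mul_eq_sum, trace_transpose_mul_eq_sum]
  refine (Finset.abs_sum_le_sum_abs _ _).trans ?_
  simpa only [abs_mul, sq, abs_mul_abs_self] using
    Real.sum_mul_le_sqrt_mul_sqrt Finset.univ (fun p : m × n => |J p.1 p.2|)
      (fun p => |M p.1 p.2|)

lemma trace_mul_mul_transpose_le {Λ : ℝ} {A : Matrix n n ℝ}
    (hA : ∀ ξ : n → ℝ, ξ ⬝ᵥ A *ᵥ ξ ≤ Λ * (ξ ⬝ᵥ ξ)) (X : Matrix m n ℝ) :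
    trace (X * A * Xᵀ) ≤ Λ * trace (X * Xᵀ) := by
  rw [trace, trace, Finset.mul_sum]
  refine Finset.sum_le_sum fun i _ => ?_
  have hXAX : (X * A * Xᵀ) i i = X i ⬝ᵥ A *ᵥ X i := by
    rw [mul_apply', mul_apply_eq_vecMul, dotProduct_mulVec]
    rfl
  have hXX : (X * Xᵀ) i i = X i ⬝ᵥ X i := by rw [mul_apply']; rfl
  rw [diag_apply, diag_apply, hXAX, hXX]
  exact hA (X i)

lemma trace_transpose_mul_self_mul_right_le {Λ : ℝ} {B : Matrix n n ℝ}
    (hB : ∀ ξ : n → ℝ, ξ ⬝ᵥ (B * Bᵀ) *ᵥ ξ ≤ Λ * (ξ ⬝ᵥ ξ)) (X : Matrix m n ℝ) :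
    trace ((X * B)ᵀ * (X * B)) ≤ Λ * trace (Xᵀ * X) := by
  rw [trace_mul_comm, transpose_mul, trace_mul_comm Xᵀ]
  simpa only [Matrix.mul_assoc] using trace_mul_mul_transpose_le hB X

lemma trace_transpose_mul_self_mul_left_le {Λ : ℝ} {B : Matrix m m ℝ}
    (hB : ∀ ξ : m → ℝ, ξ ⬝ᵥ (Bᵀ * B) *ᵥ ξ ≤ Λ * (ξ ⬝ᵥ ξ)) (X : Matrix m n ℝ) :
    trace ((B * X)ᵀ * (B * X)) ≤ Λ * trace (Xᵀ * X) := by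
  simpa only [transpose_mul, transpose_transpose, Matrix.mul_assoc] using
    trace_mul_mul_transpose_le hB Xᵀ

lemma trace_transpose_mul_self_Jmat_le {k : ℕ} {α : ℝ} (hα : α ∈ Set.Icc (0 : ℝ) 2) :
    trace ((Jmat k α)ᵀ * Jmat k α) ≤ k := by
  rw [Jmat, diagonal_transpose, diagonal_mul_diagonal, trace_diagonal]
  calc ∑ i : Fin k, _ ≤ ∑ _i : Fin k, (1 : ℝ) := Finset.sum_le_sum fun i _ => by
        split_ifs <;> nlinarith [hα.1, hα.2]
    _ = k := by simp

lemma abs_trace_Jmat_mul_le {k : ℕ} {α : ℝ} (hα : α ∈ Set.Icc (0 : ℝ) 2)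
    (M : Matrix (Fin k) (Fin k) ℝ) :
    |trace (Jmat k α * M)| ≤ √k * √(trace (Mᵀ * M)) := by
  have hJ : (Jmat k α)ᵀ = Jmat k α := diagonal_transpose _
  calc |trace (Jmat k α * M)| = |trace ((Jmat k α)ᵀ * M)| := by rw [hJ]
    _ ≤ √(trace ((Jmat k α)ᵀ * Jmat k α)) * √(trace (Mᵀ * M)) :=
      abs_trace_transpose_mul_le _ _
    _ ≤ √k * √(trace (Mᵀ * M)) := by
      gcongr
      exact trace_transpose_mul_self_Jmat_le hα

lemma trace_Jmat_mul_vecMulVec_single {k : ℕ} (α : ℝ) (i₀ : Fin k) (hi₀ : (i₀ : ℕ) = 0) :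
    trace (Jmat k α * vecMulVec (Pi.single i₀ 1) (Pi.single i₀ 1)) = α - 1 := by
  rw [← single_eq_single_vecMulVec_single, trace_mul_single, Jmat, diagonal_apply_eq,
    if_pos hi₀]
  simp

section Householder

variable [DecidableEq n]

noncomputable def householder (u : n → ℝ) : Matrix n n ℝ :=
  1 - (2 / (u ⬝ᵥ u)) • vecMulVec u u

lemma householder_transpose (u : n → ℝ) : (householder u)ᵀ = householder u := by
  rw [householder, transpose_sub, transpose_one, transpose_smul, transpose_vecMulVec]

lemma householder_mul_self {u : n → ℝ} (hu : u ≠ 0) : householder u * householder u = 1 := by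
  rw [householder]
  set t := u ⬝ᵥ u
  have ht : t ≠ 0 := fun h => hu (dotProduct_self_eq_zero.1 h)
  have hNN : vecMulVec u u * vecMulVec u u = t • vecMulVec u u := by
    rw [vecMulVec_mul_vecMulVec, vecMulVec_smul]
  have hc : 2 / t * (2 / t * t) = 2 / t + 2 / t := by
    field_simp; ring
  simp only [sub_mul, mul_sub, one_mul, mul_one, Matrix.smul_mul, Matrix.mul_smul, hNN, smul_smul,
    hc, add_smul]
  abel

lemma mul_householder_mul (B C : Matrix n n ℝ) (u : n → ℝ) :
    B * householder u * C = B * C - (2 / (u ⬝ᵥ u)) • vecMulVec (B *ᵥ u) (u ᵥ* C) := by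
  rw [householder, mul_sub, mul_one, sub_mul, Matrix.mul_smul, Matrix.smul_mul, mul_vecMulVec,
    vecMulVec_mul]

end Householder

lemma isOrthMat_householder {k : ℕ} {u : Fin k → ℝ} (hu : u ≠ 0) : IsOrthMat (householder u) := by
  rw [IsOrthMat, householder_transpose, householder_mul_self hu]
  exact ⟨rfl, rfl⟩

lemma add_sub_two_smul_mul_mul_eq (B₁ B₂ Q : Matrix n n ℝ) :
    B₁ * B₁ + B₂ * B₂ - (2 : ℝ) • (B₂ * Q * B₁) =
      (2 : ℝ) • (B₁ * B₁ - B₁ * Q * B₁) - B₂ * (B₁ - B₂) - (B₁ - B₂) * B₁ +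
        (2 : ℝ) • ((B₁ - B₂) * Q * B₁) := by
  simp only [mul_sub, sub_mul]
  module

lemma msqrt_eq_cfc {k : ℕ} {A : Matrix (Fin k) (Fin k) ℝ} (hA : A.PosSemidef) :
    msqrt A = cfc Real.sqrt A := by
  rw [msqrt, dif_pos hA, hA.1.cfc_eq, IsHermitian.cfc, Unitary.conjStarAlgAut_apply]
  rfl

lemma msqrt_mul_self {k : ℕ} {A : Matrix (Fin k) (Fin k) ℝ} (hA : A.PosSemidef) :
    msqrt A * msqrt A = A := by
  have hspec : ∀ x ∈ spectrum ℝ A, √x * √x = x := by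
    rw [hA.1.spectrum_real_eq_range_eigenvalues]
    rintro - ⟨i, rfl⟩
    exact Real.mul_self_sqrt (hA.eigenvalues_nonneg i)
  rw [msqrt_eq_cfc hA, ← cfc_mul Real.sqrt Real.sqrt A, cfc_congr hspec,
    cfc_id' ℝ A hA.1.isSelfAdjoint]

lemma msqrt_transpose {k : ℕ} {A : Matrix (Fin k) (Fin k) ℝ} (hA : A.PosSemidef) :
    (msqrt A)ᵀ = msqrt A := by
  rw [msqrt_eq_cfc hA, ← conjTranspose_eq_transpose_of_trivial]
  exact cfc_predicate Real.sqrt A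

lemma trace_Jmat_mul_coupling_le {k : ℕ} {α Λ : ℝ} (hα : α ∈ Set.Icc (0 : ℝ) 2)
    {B₁ B₂ Q : Matrix (Fin k) (Fin k) ℝ} (hQ : Q * Qᵀ = 1) (hB₁ : B₁ᵀ = B₁) (hB₂ : B₂ᵀ = B₂)
    (hΛ₁ : ∀ ξ, ξ ⬝ᵥ (B₁ * B₁) *ᵥ ξ ≤ Λ * (ξ ⬝ᵥ ξ))
    (hΛ₂ : ∀ ξ, ξ ⬝ᵥ (B₂ * B₂) *ᵥ ξ ≤ Λ * (ξ ⬝ᵥ ξ)) :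
    trace (Jmat k α * (B₁ * B₁ + B₂ * B₂ - (2 : ℝ) • (B₂ * Q * B₁))) ≤
      2 * trace (Jmat k α * (B₁ * B₁ - B₁ * Q * B₁)) +
        4 * (√(k * Λ) * √(trace ((B₁ - B₂)ᵀ * (B₁ - B₂)))) := by
  set D := B₁ - B₂
  have hD := trace_transpose_mul_self_nonneg D
  have hJ : ∀ M, trace (Mᵀ * M) ≤ Λ * trace (Dᵀ * D) →
      |trace (Jmat k α * M)| ≤ √(k * Λ) * √(trace (Dᵀ * D)) := fun M hM =>
    calc |trace (Jmat k α * M)| ≤ √k * √(trace (Mᵀ * M)) := abs_trace_Jmat_mul_le hα M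
      _ ≤ √k * √(Λ * trace (Dᵀ * D)) := by gcongr
      _ = √(k * Λ) * √(trace (Dᵀ * D)) := by
        rw [Real.sqrt_mul' _ hD, Real.sqrt_mul (Nat.cast_nonneg k), mul_assoc]
  have h₁ := hJ (B₂ * D) (trace_transpose_mul_self_mul_left_le (by rwa [hB₂]) D)
  have h₂ := hJ (D * B₁) (trace_transpose_mul_self_mul_right_le (by rwa [hB₁]) D)
  have h₃ := hJ (D * Q * B₁) (by
    have hDQ : trace ((D * Q)ᵀ * (D * Q)) = trace (Dᵀ * D) := by
      rw [trace_mul_comm, transpose_mul, Matrix.mul_assoc, ← Matrix.mul_assoc Q, hQ,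
        Matrix.one_mul, trace_mul_comm]
    simpa only [hDQ] using trace_transpose_mul_self_mul_right_le (by rwa [hB₁]) (D * Q))
  rw [add_sub_two_smul_mul_mul_eq, mul_add, mul_sub, mul_sub, trace_add, trace_sub, trace_sub,
    Matrix.mul_smul, Matrix.mul_smul, trace_smul, trace_smul, smul_eq_mul, smul_eq_mul]
  linarith [abs_le.1 h₁, abs_le.1 h₂, abs_le.1 h₃]

lemma isUnit_of_le_dotProduct_mul_self_mulVec [DecidableEq n] {lam : ℝ} (hlam : 0 < lam)
    {B : Matrix n n ℝ} (hB : ∀ ξ, lam * (ξ ⬝ᵥ ξ) ≤ ξ ⬝ᵥ (B * B) *ᵥ ξ) :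
    IsUnit B := by
  refine mulVec_injective_iff_isUnit.1 fun x y hxy => ?_
  have hker : B *ᵥ (x - y) = 0 := by rw [mulVec_sub, hxy, sub_self]
  have hxy' := hB (x - y)
  rw [← mulVec_mulVec, hker, mulVec_zero, dotProduct_zero] at hxy'
  have : (x - y) ⬝ᵥ (x - y) = 0 :=
    le_antisymm (nonpos_of_mul_nonpos_right hxy' hlam) (dotProduct_star_self_nonneg _)
  exact sub_eq_zero.1 (dotProduct_self_eq_zero.1 this)

lemma exists_isOrthMat_trace_Jmat_mul_sub_le {k : ℕ} (hk : 0 < k) {α lam : ℝ} (hα : α ≤ 1)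
    (hlam : 0 < lam) {B : Matrix (Fin k) (Fin k) ℝ} (hB : Bᵀ = B)
    (hlamB : ∀ ξ, lam * (ξ ⬝ᵥ ξ) ≤ ξ ⬝ᵥ (B * B) *ᵥ ξ) :
    ∃ Q, IsOrthMat Q ∧ 2 * trace (Jmat k α * (B * B - B * Q * B)) ≤ -(4 * (1 - α) * lam) := by
  set e : Fin k → ℝ := Pi.single ⟨0, hk⟩ 1
  have hee : e ⬝ᵥ e = 1 := by simp [e]
  obtain ⟨u, hu⟩ :=
    mulVec_surjective_iff_isUnit.2 (isUnit_of_le_dotProduct_mul_self_mulVec hlam hlamB) e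
  have hu' : u ᵥ* B = e := by rw [← mulVec_transpose, hB, hu]
  have hu0 : u ≠ 0 := by
    rintro rfl
    rw [mulVec_zero] at hu
    simp [← hu] at hee
  have ht : 0 < u ⬝ᵥ u := dotProduct_self_star_pos_iff.2 hu0
  have hlt : lam * (u ⬝ᵥ u) ≤ 1 := by
    simpa only [← mulVec_mulVec, hu, dotProduct_mulVec, hu', hee] using hlamB u
  refine ⟨householder u, isOrthMat_householder hu0, ?_⟩
  rw [mul_householder_mul, hu, hu', sub_sub_cancel, Matrix.mul_smul, trace_smul,
    trace_Jmat_mul_vecMulVec_single α _ rfl, smul_eq_mul, ← mul_assoc, mul_div_assoc',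
    div_mul_eq_mul_div, div_le_iff₀ ht]
  nlinarith

end Matrix

lemma UnifElliptic.posSemidef {n : ℕ} {lam Lam : ℝ} {A : Matrix (Fin n) (Fin n) ℝ}
    (hlam : 0 ≤ lam) (hA : UnifElliptic lam Lam A) : A.PosSemidef :=
  .of_dotProduct_mulVec_nonneg hA.1 fun x =>
    (mul_nonneg hlam (dotProduct_star_self_nonneg x)).trans (hA.2 x).1

/-- the coupling trace estimate in terms of the Frobenius distance
of the square roots (continuous coefficients remark). -/
theorem stmt9 {n : ℕ} (hn : 2 ≤ n)
    (lam Lam : ℝ) (hlam : 0 < lam) (hlL : lam ≤ Lam)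
    (α : ℝ) (hα : α ∈ Set.Ioo (0 : ℝ) 1) :
    ∀ A1 A2 : Matrix (Fin n) (Fin n) ℝ,
      UnifElliptic lam Lam A1 → UnifElliptic lam Lam A2 →
      (∃ Q, IsOrthMat Q ∧
        Matrix.trace (Jmat n α * (A1 + A2 - (2 : ℝ) • (msqrt A2 * Q * msqrt A1))) ≤
          4 * (Real.sqrt ((n : ℝ) * Lam) *
              Real.sqrt (Matrix.trace ((msqrt A1 - msqrt A2)ᵀ * (msqrt A1 - msqrt A2)))
            - (1 - α) * lam)) ∧
      (Real.sqrt (Matrix.trace ((msqrt A1 - msqrt A2)ᵀ * (msqrt A1 - msqrt A2))) ≤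
          (1 - α) * lam / (2 * Real.sqrt ((n : ℝ) * Lam)) →
        ∃ Q, IsOrthMat Q ∧
          Matrix.trace (Jmat n α * (A1 + A2 - (2 : ℝ) • (msqrt A2 * Q * msqrt A1))) ≤
            -(2 * (1 - α) * lam)) := by
  intro A1 A2 hA1 hA2
  have hA1' := hA1.posSemidef hlam.le
  have hA2' := hA2.posSemidef hlam.le
  set S := √(n * Lam)
  set d := √(trace ((msqrt A1 - msqrt A2)ᵀ * (msqrt A1 - msqrt A2)))
  obtain ⟨Q, hQ, hbound⟩ : ∃ Q, IsOrthMat Q ∧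
      trace (Jmat n α * (A1 + A2 - (2 : ℝ) • (msqrt A2 * Q * msqrt A1))) ≤
        4 * (S * d - (1 - α) * lam) := by
    obtain ⟨Q, hQ, hreflect⟩ := exists_isOrthMat_trace_Jmat_mul_sub_le (by omega) hα.2.le hlam
      (msqrt_transpose hA1') (fun ξ => by simpa only [msqrt_mul_self hA1'] using (hA1.2 ξ).1)
    have hcoupling := trace_Jmat_mul_coupling_le ⟨hα.1.le, by linarith [hα.2]⟩ hQ.1
      (msqrt_transpose hA1') (msqrt_transpose hA2')
      (fun ξ => by simpa only [msqrt_mul_self hA1'] using (hA1.2 ξ).2)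
      (fun ξ => by simpa only [msqrt_mul_self hA2'] using (hA2.2 ξ).2)
    simp only [msqrt_mul_self hA1', msqrt_mul_self hA2'] at hcoupling hreflect
    exact ⟨Q, hQ, by linarith⟩
  refine ⟨⟨Q, hQ, hbound⟩, fun hsmall => ⟨Q, hQ, hbound.trans ?_⟩⟩
  have hS : 0 < S := Real.sqrt_pos.2 (mul_pos (by norm_cast; omega) (hlam.trans_le hlL))
  rw [le_div_iff₀ (by positivity)] at hsmall
  linarith
end
end

section
/- Let δ ≥ 1, α ∈ (0,1), and let A be the 2×2 matrix with rows (δ+1, δ−1) and (δ−1, δ+1). Then the principal square root of A is A^{1/2} = (1/√2)·[[√δ+1, √δ−1],[√δ−1, √δ+1]], and trace{ A^{1/2} J_α A^{1/2} (I − J₀) } = −(1−α)(√δ+1)² + (√δ−1)². In particular, trace{ A^{1/2} J_α A^{1/2} (I − J₀) } < 0 if and only if α < 1 − ((√δ−1)/(√δ+1))², equivalently if and only if δ < ((1+√(1−α))/(1−√(1−α)))². -/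
open MeasureTheory Matrix

noncomputable section

/-! For `δ ≥ 1` the candidate root `B = 2^{-1/2} [[√δ+1, √δ-1],[√δ-1, √δ+1]]` is positive
semidefinite with `B² = A`, so it is the principal square root by uniqueness of positive
square roots. Since `I - J₀ = diag(2, 0)`, the trace only sees the `(0,0)` entry of
`B J_α B`, which is `((α-1)(√δ+1)² + (√δ-1)²)/2`. The two sign criteria are elementary
algebra in `s = √δ ≥ 1` and `t = √(1-α) ∈ (0,1)`. -/

open scoped MatrixOrder in
theorem msqrt_eq_of_mul_self_eq {n : ℕ} {A B : Matrix (Fin n) (Fin n) ℝ}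
    (hB : B.PosSemidef) (hBA : B * B = A) : msqrt A = B := by
  have hA : A.PosSemidef := by rw [← hBA, ← pow_two]; exact hB.pow 2
  have hsqrt : CFC.sqrt A = B := CFC.sqrt_unique hBA hB.nonneg
  rw [CFC.sqrt_eq_cfc, cfc_nnreal_eq_real _ _, hA.1.cfc_eq] at hsqrt
  rw [msqrt, dif_pos hA, ← hsqrt]
  simp only [IsHermitian.cfc, Unitary.conjStarAlgAut_apply]
  congr 3
  funext i
  simp only [Function.comp_apply, Real.coe_sqrt, Real.coe_toNNReal',
    max_eq_left (hA.eigenvalues_nonneg i)]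
  rfl

theorem posSemidef_fin_two_of_abs_le {a b : ℝ} (h : |b| ≤ a) :
    (!![a, b; b, a] : Matrix (Fin 2) (Fin 2) ℝ).PosSemidef := by
  refine Matrix.posSemidef_iff_dotProduct_mulVec.2 ⟨?_, fun x => ?_⟩
  · ext i j; fin_cases i <;> fin_cases j <;> rfl
  · have hx : star x ⬝ᵥ !![a, b; b, a] *ᵥ x = a * (x 0 ^ 2 + x 1 ^ 2) + 2 * b * (x 0 * x 1) := by
      simp [dotProduct, Matrix.mulVec, Fin.sum_univ_two]
      ring
    rw [hx]
    -- `2 |x₀ x₁| ≤ x₀² + x₁²`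
    nlinarith [abs_le.1 h, sq_nonneg (x 0 + x 1), sq_nonneg (x 0 - x 1)]

theorem trace_mul_Jmat_mul_one_sub_J0 (α : ℝ) (M : Matrix (Fin 2) (Fin 2) ℝ) :
    trace (M * Jmat 2 α * M * (1 - J0 2)) = 2 * ((α - 1) * M 0 0 * M 0 0 + M 0 1 * M 1 0) := by
  have hJ : Jmat 2 α = !![α - 1, 0; 0, 1] := by
    ext i j; fin_cases i <;> fin_cases j <;> simp [Jmat]
  have hJ0 : (1 - J0 2 : Matrix (Fin 2) (Fin 2) ℝ) = !![2, 0; 0, 0] := by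
    ext i j; fin_cases i <;> fin_cases j <;> norm_num [J0, Matrix.one_apply]
  rw [hJ, hJ0, M.eta_fin_two]
  simp [Matrix.trace_fin_two]
  ring

section Example

variable {δ : ℝ}

theorem sqrtMatrix_posSemidef (hδ : 1 ≤ δ) :
    ((√2)⁻¹ • !![√δ + 1, √δ - 1; √δ - 1, √δ + 1] : Matrix (Fin 2) (Fin 2) ℝ).PosSemidef := by
  have hs : 1 ≤ √δ := Real.one_le_sqrt.2 hδ
  refine (posSemidef_fin_two_of_abs_le ?_).smul (by positivity)
  rw [abs_of_nonneg (by linarith)]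
  linarith

theorem sqrtMatrix_mul_self (hδ : 0 ≤ δ) :
    ((√2)⁻¹ • !![√δ + 1, √δ - 1; √δ - 1, √δ + 1]) *
        ((√2)⁻¹ • !![√δ + 1, √δ - 1; √δ - 1, √δ + 1]) =
      (!![δ + 1, δ - 1; δ - 1, δ + 1] : Matrix (Fin 2) (Fin 2) ℝ) := by
  have hs : √δ ^ 2 = δ := Real.sq_sqrt hδ
  have h2 : √2 ^ 2 = 2 := Real.sq_sqrt zero_le_two
  rw [smul_mul_smul, Matrix.mul_fin_two, ← pow_two, inv_pow, h2]
  ext i j; fin_cases i <;> fin_cases j <;> simp <;> field_simp <;> linear_combination 2 * hs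

theorem msqrt_example (hδ : 1 ≤ δ) :
    msqrt !![δ + 1, δ - 1; δ - 1, δ + 1] = (√2)⁻¹ • !![√δ + 1, √δ - 1; √δ - 1, √δ + 1] :=
  msqrt_eq_of_mul_self_eq (sqrtMatrix_posSemidef hδ) (sqrtMatrix_mul_self (by linarith))

theorem trace_example (α : ℝ) (hδ : 1 ≤ δ) :
    trace (msqrt !![δ + 1, δ - 1; δ - 1, δ + 1] * Jmat 2 α *
        msqrt !![δ + 1, δ - 1; δ - 1, δ + 1] * (1 - J0 2)) =
      -((1 - α) * (√δ + 1) ^ 2) + (√δ - 1) ^ 2 := by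
  rw [msqrt_example hδ, trace_mul_Jmat_mul_one_sub_J0]
  simp only [Matrix.smul_apply, of_apply, cons_val', cons_val_zero, cons_val_one, empty_val',
    cons_val_fin_one, smul_eq_mul]
  have h2 : (√2)⁻¹ * (√2)⁻¹ = 2⁻¹ := by rw [← mul_inv, Real.mul_self_sqrt zero_le_two]
  linear_combination (2 * ((α - 1) * (√δ + 1) ^ 2 + (√δ - 1) ^ 2)) * h2

end Example

theorem neg_lt_zero_iff_lt_one_sub_sq_div {α s : ℝ} (hs : 0 < s + 1) :
    -((1 - α) * (s + 1) ^ 2) + (s - 1) ^ 2 < 0 ↔ α < 1 - ((s - 1) / (s + 1)) ^ 2 := by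
  rw [div_pow, lt_sub_comm, div_lt_iff₀ (by positivity)]
  constructor <;> intro h <;> linarith

theorem neg_lt_zero_iff_sq_lt {s t : ℝ} (hs : 1 ≤ s) (ht0 : 0 ≤ t) (ht1 : t < 1) :
    -(t ^ 2 * (s + 1) ^ 2) + (s - 1) ^ 2 < 0 ↔ s ^ 2 < ((1 + t) / (1 - t)) ^ 2 := by
  have h1t : 0 < 1 - t := by linarith
  calc -(t ^ 2 * (s + 1) ^ 2) + (s - 1) ^ 2 < 0
      ↔ (s - 1) ^ 2 < (t * (s + 1)) ^ 2 := by rw [mul_pow]; constructor <;> intro h <;> linarith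
    _ ↔ s - 1 < t * (s + 1) := sq_lt_sq₀ (by linarith) (by positivity)
    _ ↔ s * (1 - t) < 1 + t := by constructor <;> intro h <;> linarith
    _ ↔ s < (1 + t) / (1 - t) := (lt_div_iff₀ h1t).symm
    _ ↔ s ^ 2 < ((1 + t) / (1 - t)) ^ 2 := (sq_lt_sq₀ (by linarith) (by positivity)).symm

/-- the explicit 2×2 example with the mirror coupling `J₀`
(Example 6.2). -/
theorem stmt15 (δ : ℝ) (hδ : 1 ≤ δ) (α : ℝ) (hα : α ∈ Set.Ioo (0 : ℝ) 1) :
    msqrt !![δ + 1, δ - 1; δ - 1, δ + 1] =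
      (Real.sqrt 2)⁻¹ •
        !![Real.sqrt δ + 1, Real.sqrt δ - 1; Real.sqrt δ - 1, Real.sqrt δ + 1] ∧
    Matrix.trace (msqrt !![δ + 1, δ - 1; δ - 1, δ + 1] * Jmat 2 α *
        msqrt !![δ + 1, δ - 1; δ - 1, δ + 1] * (1 - J0 2)) =
      -((1 - α) * (Real.sqrt δ + 1) ^ 2) + (Real.sqrt δ - 1) ^ 2 ∧
    (Matrix.trace (msqrt !![δ + 1, δ - 1; δ - 1, δ + 1] * Jmat 2 α *
        msqrt !![δ + 1, δ - 1; δ - 1, δ + 1] * (1 - J0 2)) < 0 ↔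
      α < 1 - ((Real.sqrt δ - 1) / (Real.sqrt δ + 1)) ^ 2) ∧
    (Matrix.trace (msqrt !![δ + 1, δ - 1; δ - 1, δ + 1] * Jmat 2 α *
        msqrt !![δ + 1, δ - 1; δ - 1, δ + 1] * (1 - J0 2)) < 0 ↔
      δ < ((1 + Real.sqrt (1 - α)) / (1 - Real.sqrt (1 - α))) ^ 2) := by
  have hs : 1 ≤ √δ := Real.one_le_sqrt.2 hδ
  have ht : √(1 - α) ^ 2 = 1 - α := Real.sq_sqrt (by linarith [hα.2])
  have ht1 : √(1 - α) < 1 := (Real.sqrt_lt' one_pos).2 (by linarith [hα.1])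
  rw [trace_example α hδ]
  refine ⟨msqrt_example hδ, rfl, neg_lt_zero_iff_lt_one_sub_sq_div (by linarith), ?_⟩
  have key := neg_lt_zero_iff_sq_lt hs (Real.sqrt_nonneg _) ht1
  rwa [ht, Real.sq_sqrt (by linarith)] at key

end
end

section
/- In ℝ³, let E₁ = diag(1,100,1)·𝔹 and E₂ = diag(1,1,100)·𝔹 be the images of the open unit ball under the indicated diagonal linear maps (two congruent ellipsoids of equal volume with largest axes along e₂ and e₃ respectively). Then for every measurable measure-preserving map φ : E₁ → E₂ (pushforward under φ of Lebesgue measure restricted to E₁ equals Lebesgue measure restricted to E₂), one has ⨍_{E₁} |P₁(φ(y) − y)|² dy ≤ 4 and ⨍_{E₁} |(I − P₁)(φ(y) − y)|² dy ≥ 8; in particular ⨍_{E₁} |P₁(φ(y) − y)|² dy < ⨍_{E₁} |(I − P₁)(φ(y) − y)|² dy. -/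
open MeasureTheory Matrix

noncomputable section

/-- The ellipsoid `diag(1,100,1)·𝔹` in `ℝ³`. -/
def ellipsoid3E1 : Set (EucSp 3) :=
  {y | (y 0) ^ 2 + (y 1 / 100) ^ 2 + (y 2) ^ 2 < 1}

/-- The ellipsoid `diag(1,1,100)·𝔹` in `ℝ³`. -/
def ellipsoid3E2 : Set (EucSp 3) :=
  {y | (y 0) ^ 2 + (y 1) ^ 2 + (y 2 / 100) ^ 2 < 1}

/-! The first coordinates of `y ∈ E₁` and `φ y ∈ E₂` both lie in `(-1, 1)`, so
`|P₁(φ y - y)|² ≤ 4` pointwise. For the other part, `|(I - P₁)(φ y - y)|² ≥ (φ y)₃² / 2 - y₃²`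
and `y₃² < 1`; since `φ` pushes Lebesgue measure on `E₁` to Lebesgue measure on `E₂`, the average
of `(φ y)₃²` over `E₁` is the average of `x₃²` over `E₂`, which is large because `E₂` is long in
the direction `e₃`: it contains the box `(-½, ½)² × (50, 70)` of volume 20, on which `x₃² ≥ 2500`,
and lies in a box of volume 800. -/

open scoped ENNReal

section Average

variable {α : Type*} [MeasurableSpace α] {μ : Measure α} {s : Set α} {f g : α → ℝ}

theorem setAverage_mono_on (hf : IntegrableOn f s μ) (hg : IntegrableOn g s μ)
    (hs : MeasurableSet s) (h : ∀ x ∈ s, f x ≤ g x) :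
    ⨍ x in s, f x ∂μ ≤ ⨍ x in s, g x ∂μ := by
  rw [setAverage_eq, setAverage_eq]
  exact smul_le_smul_of_nonneg_left (setIntegral_mono_on hf hg hs h) (by positivity)

theorem setAverage_le_of_forall_le (hf : IntegrableOn f s μ) (hs : MeasurableSet s)
    (hs₀ : μ s ≠ 0) (hs_top : μ s ≠ ∞) {C : ℝ} (h : ∀ x ∈ s, f x ≤ C) :
    ⨍ x in s, f x ∂μ ≤ C :=
  (setAverage_mono_on hf (integrableOn_const hs_top) hs h).trans_eq
    (setAverage_const hs₀ hs_top C)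

theorem setAverage_mul_add_const (hf : IntegrableOn f s μ) (hs₀ : μ s ≠ 0)
    (hs_top : μ s ≠ ∞) (a b : ℝ) :
    ⨍ x in s, (a * f x + b) ∂μ = a * ⨍ x in s, f x ∂μ + b := by
  have hs : μ.real s ≠ 0 := ENNReal.toReal_ne_zero.2 ⟨hs₀, hs_top⟩
  rw [setAverage_eq, setAverage_eq, integral_add (hf.const_mul a) (integrableOn_const hs_top),
    integral_const_mul, setIntegral_const, smul_eq_mul, smul_eq_mul, smul_eq_mul]
  field_simp

theorem le_setAverage_of_le_on_subset {t : Set α} (hst : s ⊆ t) (hs : MeasurableSet s)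
    (ht : MeasurableSet t) (ht_top : μ t ≠ ∞) (hf : IntegrableOn f t μ)
    (hf₀ : ∀ x ∈ t, 0 ≤ f x) {c : ℝ} (hc : ∀ x ∈ s, c ≤ f x) :
    c * μ.real s / μ.real t ≤ ⨍ x in t, f x ∂μ := by
  have hs_top : μ s ≠ ∞ := ne_top_of_le_ne_top ht_top (measure_mono hst)
  have h_int : c * μ.real s ≤ ∫ x in t, f x ∂μ :=
    calc c * μ.real s = ∫ _ in s, c ∂μ := by rw [setIntegral_const, smul_eq_mul, mul_comm]
      _ ≤ ∫ x in s, f x ∂μ :=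
        setIntegral_mono_on (integrableOn_const hs_top) (hf.mono_set hst) hs hc
      _ ≤ ∫ x in t, f x ∂μ :=
        setIntegral_mono_set hf (ae_restrict_of_forall_mem ht hf₀) hst.eventuallyLE
  rw [setAverage_eq, smul_eq_mul, div_eq_inv_mul]
  exact mul_le_mul_of_nonneg_left h_int (by positivity)

theorem setAverage_comp_of_map_eq {β : Type*} [MeasurableSpace β] {ν : Measure β} {t : Set β}
    {φ : α → β} (hφ : AEMeasurable φ (μ.restrict s))
    (hmap : Measure.map φ (μ.restrict s) = ν.restrict t) {h : β → ℝ}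
    (hh : AEStronglyMeasurable h (ν.restrict t)) :
    ⨍ x in s, h (φ x) ∂μ = ⨍ y in t, h y ∂ν := by
  rw [← hmap] at hh ⊢
  rw [average_eq, average_eq, integral_map hφ hh, measureReal_def, measureReal_def,
    Measure.map_apply_of_aemeasurable hφ MeasurableSet.univ, Set.preimage_univ]

theorem IsCompact.integrableOn_comp {X : Type*} [TopologicalSpace X] [MeasurableSpace X]
    [OpensMeasurableSpace X] {K : Set X} (hK : IsCompact K) {h : X → ℝ} (hh : Continuous h)
    {φ : α → X} (hφ : Measurable φ) (hmaps : Set.MapsTo φ s K) (hs : MeasurableSet s)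
    (hs_top : μ s ≠ ∞) : IntegrableOn (fun x => h (φ x)) s μ := by
  obtain ⟨C, hC⟩ := hK.exists_bound_of_continuousOn hh.continuousOn
  exact Measure.integrableOn_of_bounded hs_top (hh.measurable.comp hφ).aestronglyMeasurable
    (ae_restrict_of_forall_mem hs fun x hx => hC _ (hmaps hx))

end Average

theorem EuclideanSpace.volume_setOf_forall_mem_Ioo {ι : Type*} [Fintype ι] (a b : ι → ℝ) :
    volume {x : EuclideanSpace ℝ ι | ∀ i, x i ∈ Set.Ioo (a i) (b i)} =
      ∏ i, ENNReal.ofReal (b i - a i) := by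
  have : {x : EuclideanSpace ℝ ι | ∀ i, x i ∈ Set.Ioo (a i) (b i)} =
      WithLp.ofLp ⁻¹' Set.univ.pi fun i => Set.Ioo (a i) (b i) := by
    ext x; simp
  rw [this, (PiLp.volume_preserving_ofLp ι).measure_preimage
    (MeasurableSet.univ_pi fun _ => measurableSet_Ioo).nullMeasurableSet, volume_pi_pi]
  simp [Real.volume_Ioo]

theorem EuclideanSpace.volumeReal_setOf_forall_mem_Ioo {ι : Type*} [Fintype ι] {a b : ι → ℝ}
    (hab : a ≤ b) :
    volume.real {x : EuclideanSpace ℝ ι | ∀ i, x i ∈ Set.Ioo (a i) (b i)} =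
      ∏ i, (b i - a i) := by
  rw [measureReal_def, volume_setOf_forall_mem_Ioo, ENNReal.toReal_prod]
  exact Finset.prod_congr rfl fun i _ => ENNReal.toReal_ofReal (sub_nonneg.2 (hab i))

theorem isOpen_ellipsoid3E1 : IsOpen ellipsoid3E1 :=
  isOpen_lt (by fun_prop) continuous_const

theorem isOpen_ellipsoid3E2 : IsOpen ellipsoid3E2 :=
  isOpen_lt (by fun_prop) continuous_const

theorem sq_coord_lt_of_mem_ellipsoid3E1 {y : EucSp 3} (hy : y ∈ ellipsoid3E1) :
    y 0 ^ 2 < 1 ∧ y 1 ^ 2 < 100 ^ 2 ∧ y 2 ^ 2 < 1 := by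
  have h : y 0 ^ 2 + (y 1 / 100) ^ 2 + y 2 ^ 2 < 1 := hy
  refine ⟨?_, ?_, ?_⟩ <;> nlinarith [sq_nonneg (y 0), sq_nonneg (y 1), sq_nonneg (y 2)]

theorem sq_coord_lt_of_mem_ellipsoid3E2 {y : EucSp 3} (hy : y ∈ ellipsoid3E2) :
    y 0 ^ 2 < 1 ∧ y 1 ^ 2 < 1 ∧ y 2 ^ 2 < 100 ^ 2 := by
  have h : y 0 ^ 2 + y 1 ^ 2 + (y 2 / 100) ^ 2 < 1 := hy
  refine ⟨?_, ?_, ?_⟩ <;> nlinarith [sq_nonneg (y 0), sq_nonneg (y 1), sq_nonneg (y 2)]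

theorem mem_closedBall_of_sq_coord_le {y : EucSp 3} {r : ℝ} (hr : 0 ≤ r)
    (hy : y 0 ^ 2 + y 1 ^ 2 + y 2 ^ 2 ≤ r ^ 2) : y ∈ Metric.closedBall 0 r := by
  rw [mem_closedBall_zero_iff, EuclideanSpace.norm_eq, Real.sqrt_le_left hr, Fin.sum_univ_three]
  simpa using hy

theorem ellipsoid3E1_subset_closedBall : ellipsoid3E1 ⊆ Metric.closedBall 0 100 := by
  intro y hy
  have h : y 0 ^ 2 + (y 1 / 100) ^ 2 + y 2 ^ 2 < 1 := hy
  exact mem_closedBall_of_sq_coord_le (by norm_num)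
    (by nlinarith [sq_nonneg (y 0), sq_nonneg (y 2)])

theorem ellipsoid3E2_subset_closedBall : ellipsoid3E2 ⊆ Metric.closedBall 0 100 := by
  intro y hy
  have h : y 0 ^ 2 + y 1 ^ 2 + (y 2 / 100) ^ 2 < 1 := hy
  exact mem_closedBall_of_sq_coord_le (by norm_num)
    (by nlinarith [sq_nonneg (y 0), sq_nonneg (y 1)])

theorem volume_ellipsoid3E1_ne_zero : volume ellipsoid3E1 ≠ 0 :=
  isOpen_ellipsoid3E1.measure_ne_zero _ ⟨0, by simp [ellipsoid3E1]⟩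

theorem volume_ellipsoid3E1_ne_top : volume ellipsoid3E1 ≠ ∞ :=
  ne_top_of_le_ne_top measure_closedBall_lt_top.ne (measure_mono ellipsoid3E1_subset_closedBall)

theorem volume_ellipsoid3E2_ne_top : volume ellipsoid3E2 ≠ ∞ :=
  ne_top_of_le_ne_top measure_closedBall_lt_top.ne (measure_mono ellipsoid3E2_subset_closedBall)

theorem volumeReal_ellipsoid3E2_le : volume.real ellipsoid3E2 ≤ 800 := by
  have hsub : ellipsoid3E2 ⊆
      {x : EucSp 3 | ∀ i, x i ∈ Set.Ioo (![-1, -1, -100] i) (![1, 1, 100] i)} := by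
    intro x hx i
    obtain ⟨h0, h1, h2⟩ := sq_coord_lt_of_mem_ellipsoid3E2 hx
    fin_cases i <;>
      simp only [Fin.isValue, Fin.zero_eta, Fin.mk_one, Fin.reduceFinMk, cons_val_zero,
        cons_val_one, cons_val, Set.mem_Ioo] <;>
      constructor <;> nlinarith
  calc volume.real ellipsoid3E2 ≤ _ :=
        measureReal_mono hsub (by
          rw [EuclideanSpace.volume_setOf_forall_mem_Ioo]
          exact ENNReal.prod_ne_top fun _ _ => ENNReal.ofReal_ne_top)
    _ = 800 := by
      rw [EuclideanSpace.volumeReal_setOf_forall_mem_Ioo]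
      · norm_num [Fin.prod_univ_three, cons_val_two]
      · intro i; fin_cases i <;> norm_num

theorem le_setAverage_sq_coord_two_ellipsoid3E2 :
    (125 / 2 : ℝ) ≤ ⨍ x in ellipsoid3E2, x 2 ^ 2 := by
  set B := {x : EucSp 3 | ∀ i, x i ∈ Set.Ioo (![-1/2, -1/2, 50] i) (![1/2, 1/2, 70] i)}
  have hB : volume.real B = 20 := by
    rw [EuclideanSpace.volumeReal_setOf_forall_mem_Ioo]
    · norm_num [Fin.prod_univ_three, cons_val_two]
    · intro i; fin_cases i <;> norm_num
  have hBsub : B ⊆ ellipsoid3E2 := by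
    intro x hx
    have h0 := hx 0; have h1 := hx 1; have h2 := hx 2
    simp only [Fin.isValue, cons_val_zero, cons_val_one, cons_val, Set.mem_Ioo] at h0 h1 h2
    show x 0 ^ 2 + x 1 ^ 2 + (x 2 / 100) ^ 2 < 1
    nlinarith
  have hc : ∀ x ∈ B, (2500 : ℝ) ≤ x 2 ^ 2 := by
    intro x hx
    have h2 := hx 2
    simp only [Fin.isValue, cons_val, Set.mem_Ioo] at h2
    nlinarith
  have hint : IntegrableOn (fun x : EucSp 3 => x 2 ^ 2) ellipsoid3E2 :=
    (isCompact_closedBall 0 100).integrableOn_comp (h := fun x : EucSp 3 => x 2 ^ 2) (by fun_prop)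
      measurable_id ellipsoid3E2_subset_closedBall isOpen_ellipsoid3E2.measurableSet
      volume_ellipsoid3E2_ne_top
  have hpos : 0 < volume.real ellipsoid3E2 := by
    linarith [measureReal_mono hBsub volume_ellipsoid3E2_ne_top]
  calc (125 / 2 : ℝ) ≤ 2500 * volume.real B / volume.real ellipsoid3E2 := by
        rw [hB, le_div_iff₀ hpos]
        linarith [volumeReal_ellipsoid3E2_le]
    _ ≤ ⨍ x in ellipsoid3E2, x 2 ^ 2 :=
      le_setAverage_of_le_on_subset hBsub (by measurability) isOpen_ellipsoid3E2.measurableSet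
        volume_ellipsoid3E2_ne_top hint (fun x _ => sq_nonneg _) hc

section MeasurePreservingMap

variable {φ : EucSp 3 → EucSp 3}

theorem integrableOn_ellipsoid3E1_graph (hφmeas : Measurable φ)
    (hφmaps : ∀ y ∈ ellipsoid3E1, φ y ∈ ellipsoid3E2)
    {h : EucSp 3 × EucSp 3 → ℝ} (hh : Continuous h) :
    IntegrableOn (fun y => h (y, φ y)) ellipsoid3E1 :=
  ((isCompact_closedBall 0 100).prod (isCompact_closedBall 0 100)).integrableOn_comp hh
    (measurable_id.prodMk hφmeas)
    (fun y hy =>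
      ⟨ellipsoid3E1_subset_closedBall hy, ellipsoid3E2_subset_closedBall (hφmaps y hy)⟩)
    isOpen_ellipsoid3E1.measurableSet volume_ellipsoid3E1_ne_top

theorem setAverage_sq_coord_zero_sub_le (hφmeas : Measurable φ)
    (hφmaps : ∀ y ∈ ellipsoid3E1, φ y ∈ ellipsoid3E2) :
    ⨍ y in ellipsoid3E1, ((φ y - y) 0) ^ 2 ≤ 4 := by
  refine setAverage_le_of_forall_le
    (integrableOn_ellipsoid3E1_graph hφmeas hφmaps (h := fun p => ((p.2 - p.1) 0) ^ 2)
      (by fun_prop))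
    isOpen_ellipsoid3E1.measurableSet volume_ellipsoid3E1_ne_zero volume_ellipsoid3E1_ne_top
    fun y hy => ?_
  obtain ⟨hy0, -, -⟩ := sq_coord_lt_of_mem_ellipsoid3E1 hy
  obtain ⟨hφy0, -, -⟩ := sq_coord_lt_of_mem_ellipsoid3E2 (hφmaps y hy)
  change (φ y 0 - y 0) ^ 2 ≤ 4
  nlinarith [sq_nonneg (φ y 0 + y 0)]

theorem le_setAverage_sq_coord_one_two_sub (hφmeas : Measurable φ)
    (hφmaps : ∀ y ∈ ellipsoid3E1, φ y ∈ ellipsoid3E2)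
    (hφpush : Measure.map φ (volume.restrict ellipsoid3E1) = volume.restrict ellipsoid3E2) :
    8 ≤ ⨍ y in ellipsoid3E1, (((φ y - y) 1) ^ 2 + ((φ y - y) 2) ^ 2) := by
  have hpt : ∀ y ∈ ellipsoid3E1,
      1 / 2 * φ y 2 ^ 2 + -1 ≤ ((φ y - y) 1) ^ 2 + ((φ y - y) 2) ^ 2 := by
    intro y hy
    obtain ⟨-, -, hy2⟩ := sq_coord_lt_of_mem_ellipsoid3E1 hy
    change _ ≤ (φ y 1 - y 1) ^ 2 + (φ y 2 - y 2) ^ 2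
    nlinarith [sq_nonneg (φ y 1 - y 1), sq_nonneg (φ y 2 - 2 * y 2)]
  calc (8 : ℝ) ≤ 1 / 2 * (⨍ x in ellipsoid3E2, x 2 ^ 2) + -1 := by
        linarith [le_setAverage_sq_coord_two_ellipsoid3E2]
    _ = 1 / 2 * (⨍ y in ellipsoid3E1, φ y 2 ^ 2) + -1 := by
        rw [setAverage_comp_of_map_eq (h := fun x : EucSp 3 => x 2 ^ 2) hφmeas.aemeasurable hφpush
          (by fun_prop)]
    _ = ⨍ y in ellipsoid3E1, (1 / 2 * φ y 2 ^ 2 + -1) :=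
        (setAverage_mul_add_const
          (integrableOn_ellipsoid3E1_graph hφmeas hφmaps (h := fun p => p.2 2 ^ 2) (by fun_prop))
          volume_ellipsoid3E1_ne_zero volume_ellipsoid3E1_ne_top _ _).symm
    _ ≤ _ := setAverage_mono_on
        (integrableOn_ellipsoid3E1_graph hφmeas hφmaps (h := fun p => 1 / 2 * p.2 2 ^ 2 + -1)
          (by fun_prop))
        (integrableOn_ellipsoid3E1_graph hφmeas hφmaps
          (h := fun p => ((p.2 - p.1) 1) ^ 2 + ((p.2 - p.1) 2) ^ 2) (by fun_prop))
        isOpen_ellipsoid3E1.measurableSet hpt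

end MeasurePreservingMap

/-- the three-dimensional counterexample for large distortion
(Section 6.3.2): no measure-preserving coupling works. -/
theorem stmt19 (φ : EucSp 3 → EucSp 3) (hφmeas : Measurable φ)
    (hφmaps : ∀ y ∈ ellipsoid3E1, φ y ∈ ellipsoid3E2)
    (hφpush : Measure.map φ (volume.restrict ellipsoid3E1) =
      volume.restrict ellipsoid3E2) :
    (⨍ y in ellipsoid3E1, ((φ y - y) 0) ^ 2) ≤ 4 ∧
    (⨍ y in ellipsoid3E1, (((φ y - y) 1) ^ 2 + ((φ y - y) 2) ^ 2)) ≥ 8 ∧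
    (⨍ y in ellipsoid3E1, ((φ y - y) 0) ^ 2) <
      (⨍ y in ellipsoid3E1, (((φ y - y) 1) ^ 2 + ((φ y - y) 2) ^ 2)) := by
  have h₁ := setAverage_sq_coord_zero_sub_le hφmeas hφmaps
  have h₂ := le_setAverage_sq_coord_one_two_sub hφmeas hφmaps hφpush
  exact ⟨h₁, h₂, by linarith⟩

end
end
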